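/- Let V = v₀…v_{n-1} be cyclically reduced, and suppose indices i, j satisfy the type-(3) linked-pair overlap condition: there exists r ∈ {1,…,n−1} maximal such that v_{i-r}…v_{i-1} = inverse of (v_j…v_{j+r-1}) reversed, i.e., v_{i-s} = v̄_{j+s-1} for all 1 ≤ s ≤ r. Then the free reduction of the concatenation V_{j,i} (segment from j to i) cancels exactly r letter pairs at the seam when V_{j,i} is cyclically reduced as a cyclic word; more precisely, the cyclic class of V_{j,i} equals the cyclic class of V_{j+r, i-r}, and ℓ(cyclic reduction of V_{j,i}) = ((i−j) mod n) − 2r. -/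

import Mathlib

/-- The word `v_i v_{i+1} … v_{i+len-1}` read off from the letter function `v`. -/
def seg {A : Type*} (v : ℕ → A) (i len : ℕ) : List A :=
  (List.range len).map (fun t => v (i + t))

/-- Freely reduced: no letter is followed by its formal inverse. -/
def FRed {A : Type*} (bar : A → A) (w : List A) : Prop :=
  w.Chain' (fun x y => y ≠ bar x)

/-- Cyclically reduced: every rotation is freely reduced. -/
def CRed {A : Type*} (bar : A → A) (w : List A) : Prop :=
  ∀ r, FRed bar (w.rotate r)

/-- `p`-fold concatenation power of a word. -/
def pw {A : Type*} (w : List A) (m : ℕ) : List A := (List.replicate m w).flatten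

/-- `w₂` is a cyclic rotation of `w₁`. -/
def IsRot {A : Type*} (w₁ w₂ : List A) : Prop := ∃ r, w₂ = w₁.rotate r

/-- The cyclic class of `w` is not that of a proper power. -/
def Nonpower {A : Type*} (w : List A) : Prop :=
  ¬ ∃ (u : List A) (p : ℕ), 2 ≤ p ∧ IsRot (pw u p) w

/-!
Write `L = (i + n - j) % n`; then `j + L ≡ i + n (mod n)`, so by periodicity the overlap hypothesis
says that the last `r` letters of `V_{j,i} = v_j … v_{j+L-1}` are the inverses of its first `r`
letters in reverse order. The middle part `V_{j+r,i-r}` is freely reduced because `V` is, and the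
maximality of `r` says precisely that its last letter is not inverse to its first, i.e. that it is
also reduced across the cyclic seam.
-/

section Seg

variable {A : Type*}

lemma seg_eq_map_range' (v : ℕ → A) (i len : ℕ) : seg v i len = (List.range' i len).map v := by
  simp [seg, List.range'_eq_map_range, Function.comp_def]

@[simp]
lemma seg_length (v : ℕ → A) (i len : ℕ) : (seg v i len).length = len := by
  simp [seg]

@[simp]
lemma getElem_seg (v : ℕ → A) (i len k : ℕ) (h : k < (seg v i len).length) :
    (seg v i len)[k] = v (i + k) := by
  simp [seg]

lemma seg_add (v : ℕ → A) (i a b : ℕ) : seg v i (a + b) = seg v i a ++ seg v (i + a) b := by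
  simp only [seg_eq_map_range', ← List.range'_append_1, List.map_append]

lemma head?_seg (v : ℕ → A) (i len : ℕ) (h : 0 < len) : (seg v i len).head? = some (v i) := by
  obtain ⟨l, rfl⟩ := Nat.exists_eq_add_of_lt h
  simp [seg_eq_map_range', List.range'_succ]

lemma getLast?_seg (v : ℕ → A) (i len : ℕ) (h : 0 < len) :
    (seg v i len).getLast? = some (v (i + len - 1)) := by
  obtain ⟨l, rfl⟩ := Nat.exists_eq_add_of_lt h
  rw [seg_add]
  simp [seg]

variable (bar : A → A)

lemma fRed_iff_isChain (w : List A) : FRed bar w ↔ w.IsChain (fun x y => y ≠ bar x) := Iff.rfl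

lemma fRed_seg {v : ℕ → A} (hred : ∀ t, v (t + 1) ≠ bar (v t)) (i len : ℕ) :
    FRed bar (seg v i len) := by
  rw [fRed_iff_isChain, seg_eq_map_range', List.isChain_map]
  exact (List.isChain_range' i len 1).imp fun a b (hab : b = a + 1) => hab ▸ hred a

lemma seg_eq_reverse_map_seg {v : ℕ → A} {k j r : ℕ}
    (h : ∀ s < r, v (k + s) = bar (v (j + (r - 1 - s)))) :
    seg v k r = ((seg v j r).map bar).reverse := by
  refine List.ext_getElem (by simp) fun s hs _ => ?_
  simp only [seg_length] at hs
  simp [List.getElem_reverse, h s hs]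

lemma cRed_of_fRed_append_self {w : List A} (hw : FRed bar (w ++ w)) : CRed bar w := by
  intro k
  rcases eq_or_ne w [] with rfl | hne
  · exact hw
  have hk : k % w.length ≤ w.length := (Nat.mod_lt _ (List.length_pos_iff.2 hne)).le
  rw [← List.rotate_mod, List.rotate_eq_drop_append_take hk]
  refine hw.infix ⟨w.take (k % w.length), w.drop (k % w.length), ?_⟩
  simp only [List.append_assoc, List.take_append_drop]
  rw [← List.append_assoc, List.take_append_drop]

lemma cRed_seg {v : ℕ → A} (hred : ∀ t, v (t + 1) ≠ bar (v t)) {i len : ℕ} (hlen : 0 < len)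
    (hwrap : v i ≠ bar (v (i + len - 1))) : CRed bar (seg v i len) := by
  refine cRed_of_fRed_append_self bar ?_
  rw [fRed_iff_isChain, List.isChain_append]
  refine ⟨fRed_seg bar hred i len, fRed_seg bar hred i len, ?_⟩
  simpa [getLast?_seg v i len hlen, head?_seg v i len hlen] using hwrap

end Seg

lemma Function.Periodic.apply_add_mod_sub {α : Type*} {v : ℕ → α} {n : ℕ}
    (hper : Function.Periodic v n) {a j s : ℕ} (hja : j ≤ a) (hs : s ≤ (a - j) % n) :
    v (j + (a - j) % n - s) = v (a - s) := by
  have h := Nat.mod_add_div (a - j) n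
  rw [show a - s = j + (a - j) % n - s + (a - j) / n * n by rw [mul_comm] at h; omega]
  exact (hper.nat_mul _ _).symm

theorem stmt14_general {A : Type*} (bar : A → A) (hbar : ∀ x, bar (bar x) = x)
    (v : ℕ → A) (n : ℕ) (hn : 0 < n)
    (hper : ∀ t, v (t + n) = v t)
    (hred : ∀ t, v (t + 1) ≠ bar (v t))
    (i j : ℕ) (r : ℕ)
    (hoverlap : ∀ s, 1 ≤ s → s ≤ r → v (i + n - s) = bar (v (j + s - 1)))
    (hmax : r + 1 ≤ n - 1 → v (i + n - (r + 1)) ≠ bar (v (j + r)))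
    (hlen : 2 * r < (i + n - j) % n) :
    seg v j ((i + n - j) % n) =
      seg v j r ++ seg v (j + r) ((i + n - j) % n - 2 * r) ++
        (List.map bar (seg v j r)).reverse ∧
    CRed bar (seg v (j + r) ((i + n - j) % n - 2 * r)) ∧
    (seg v (j + r) ((i + n - j) % n - 2 * r)).length = (i + n - j) % n - 2 * r := by
  set L := (i + n - j) % n
  set m := L - 2 * r
  have hLn : L < n := Nat.mod_lt _ hn
  have hji : j ≤ i + n := by
    by_contra h
    simp [L, Nat.sub_eq_zero_of_le (Nat.le_of_not_le h)] at hlen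
  have hseam (s : ℕ) (hs : s ≤ L) : v (j + L - s) = v (i + n - s) :=
    Function.Periodic.apply_add_mod_sub hper hji hs
  refine ⟨?_, cRed_seg bar hred (by omega) fun h => ?_, seg_length _ _ _⟩
  · rw [show L = r + m + r by omega, seg_add, seg_add]
    congr 1
    refine seg_eq_reverse_map_seg bar fun s hs => ?_
    rw [show j + (r + m) + s = j + L - (r - s) by omega, hseam _ (by omega),
      hoverlap (r - s) (by omega) (by omega)]
    congr 2
    omega
  · refine hmax (by omega) ?_
    rw [← hseam _ (by omega), show j + L - (r + 1) = j + r + m - 1 by omega, h, hbar]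

/-- (Type-(3) seam cancellation.) If `r ∈ {1,…,n−1}` is maximal with
`v_{i−s} = v̄_{j+s−1}` for `1 ≤ s ≤ r`, then the last `r` letters of `V_{j,i}` are the
inverses, in reverse order, of its first `r` letters; cyclic reduction removes them,
so the cyclic class of `V_{j,i}` is that of the cyclically reduced word
`V_{j+r,i−r} = v_{j+r}…v_{i−r−1}`, of length `((i−j) mod n) − 2r`. -/
theorem stmt14 {A : Type*} (bar : A → A) (hbar : ∀ x, bar (bar x) = x)
    (v : ℕ → A) (n : ℕ) (hn : 0 < n)
    (hper : ∀ t, v (t + n) = v t)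
    (hred : ∀ t, v (t + 1) ≠ bar (v t))
    (i j : ℕ) (hi : i < n) (hj : j < n) (hij : i ≠ j)
    (r : ℕ) (hr1 : 1 ≤ r) (hr2 : r ≤ n - 1)
    (hoverlap : ∀ s, 1 ≤ s → s ≤ r → v (i + n - s) = bar (v (j + s - 1)))
    (hmax : r + 1 ≤ n - 1 → v (i + n - (r + 1)) ≠ bar (v (j + r)))
    (hlen : 2 * r < (i + n - j) % n) :
    seg v j ((i + n - j) % n) =
      seg v j r ++ seg v (j + r) ((i + n - j) % n - 2 * r) ++
        (List.map bar (seg v j r)).reverse ∧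
    CRed bar (seg v (j + r) ((i + n - j) % n - 2 * r)) ∧
    (seg v (j + r) ((i + n - j) % n - 2 * r)).length = (i + n - j) % n - 2 * r :=
  stmt14_general bar hbar v n hn hper hred i j r hoverlap hmax hlen
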